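/- Under the stated hypotheses: Z ∈ m₀ and m₀ = (m₀ ∩ ker l) ⊕ ℝZ; the subspace k := m₀ + ℝX + ℝY is a Lie subalgebra of g; and k₀ := m₀ ∩ ker l is an ideal of k, that is, [k₀, k] ⊆ k₀; in particular l([k₀, k]) = 0. -/

import Mathlib

/-- In the setting of Kirillov's lemma (see `Statement 16` for the
hypotheses): `Z ∈ m₀` and `m₀ = (m₀ ∩ ker l) ⊕ ℝZ`; the subspace `k := m₀ + ℝX + ℝY` is a
Lie subalgebra of `g`; `k₀ := m₀ ∩ ker l` is an ideal of `k`, i.e. `[k₀,k] ⊆ k₀`; in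
particular `l([k₀,k]) = 0`. -/
theorem kirillov_reduction_subalgebra (g : Type*) [LieRing g] [LieAlgebra ℝ g]
    [FiniteDimensional ℝ g]
    (hnil : LieRing.IsNilpotent g)
    (Z : g) (hZ : ∀ W : g, (∀ V : g, ⁅W, V⁆ = 0) ↔ ∃ t : ℝ, W = t • Z)
    (l : g →ₗ[ℝ] ℝ) (hlZ : l Z = 1)
    (X Y : g) (hXY : ⁅X, Y⁆ = Z) (hlX : l X = 0) (hlY : l Y = 0)
    (g₀ : LieSubalgebra ℝ g) (hg₀mem : ∀ W : g, W ∈ g₀ ↔ ⁅W, Y⁆ = 0)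
    (hg₀ideal : ∀ u v : g, v ∈ g₀ → ⁅u, v⁆ ∈ g₀)
    (hcodim : Module.finrank ℝ g₀.toSubmodule + 1 = Module.finrank ℝ g)
    (hXg₀ : X ∉ g₀)
    (m : LieSubalgebra ℝ g)
    (hm_sub : ∀ u ∈ m, ∀ v ∈ m, l ⁅u, v⁆ = 0)
    (hm_max : ∀ h : LieSubalgebra ℝ g, (∀ u ∈ h, ∀ v ∈ h, l ⁅u, v⁆ = 0) → m ≤ h → m = h)
    (hXm : X ∈ m) (hm_not : ¬ m ≤ g₀)
    (hm_dec : ∀ w ∈ m, ∃ t : ℝ, w - t • X ∈ m.toSubmodule ⊓ g₀.toSubmodule) :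
    ∀ m₀ k₀ kk : Submodule ℝ g,
      m₀ = m.toSubmodule ⊓ g₀.toSubmodule →
      k₀ = m₀ ⊓ LinearMap.ker l →
      kk = m₀ ⊔ Submodule.span ℝ {X} ⊔ Submodule.span ℝ {Y} →
      Z ∈ m₀ ∧
      m₀ = k₀ ⊔ Submodule.span ℝ {Z} ∧
      Disjoint k₀ (Submodule.span ℝ {Z}) ∧
      (∀ u ∈ kk, ∀ v ∈ kk, ⁅u, v⁆ ∈ kk) ∧
      (∀ u ∈ k₀, ∀ v ∈ kk, ⁅u, v⁆ ∈ k₀) ∧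
      (∀ u ∈ k₀, ∀ v ∈ kk, l ⁅u, v⁆ = 0) := by
  intro m₀ k₀ kk hm₀ hk₀ hkk
  -- Z is central
  have hZc : ∀ V : g, ⁅Z, V⁆ = 0 := (hZ Z).mpr ⟨1, (one_smul ℝ Z).symm⟩
  have hZc' : ∀ V : g, ⁅V, Z⁆ = 0 := fun V => by
    rw [← lie_skew, hZc, neg_zero]
  -- Z ∈ m, via maximality applied to m ⊔ ℝZ
  have hZm : Z ∈ m := by
    set h : LieSubalgebra ℝ g :=
      { toSubmodule := m.toSubmodule ⊔ Submodule.span ℝ {Z}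
        lie_mem' := by
          intro x y hx hy
          rcases Submodule.mem_sup.mp hx with ⟨u, hu, zx, hzx, rfl⟩
          rcases Submodule.mem_sup.mp hy with ⟨v, hv, zy, hzy, rfl⟩
          rcases Submodule.mem_span_singleton.mp hzx with ⟨c, rfl⟩
          rcases Submodule.mem_span_singleton.mp hzy with ⟨d, rfl⟩
          have : ⁅u + c • Z, v + d • Z⁆ = ⁅u, v⁆ := by
            simp [lie_add, add_lie, hZc, hZc', lie_smul, smul_lie]
          rw [this]
          exact Submodule.mem_sup_left (m.lie_mem hu hv) } with hdef
    have hsub : ∀ u ∈ h, ∀ v ∈ h, l ⁅u, v⁆ = 0 := by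
      intro u hu v hv
      rcases Submodule.mem_sup.mp hu with ⟨a, ha, zx, hzx, rfl⟩
      rcases Submodule.mem_sup.mp hv with ⟨b, hb, zy, hzy, rfl⟩
      rcases Submodule.mem_span_singleton.mp hzx with ⟨c, rfl⟩
      rcases Submodule.mem_span_singleton.mp hzy with ⟨d, rfl⟩
      have : ⁅a + c • Z, b + d • Z⁆ = ⁅a, b⁆ := by
        simp [lie_add, add_lie, hZc, hZc', lie_smul, smul_lie]
      rw [this]
      exact hm_sub a ha b hb
    have hle : m ≤ h := fun x hx => Submodule.mem_sup_left hx
    have := hm_max h hsub hle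
    rw [this]
    exact Submodule.mem_sup_right (Submodule.mem_span_singleton_self Z)
  have hZg₀ : Z ∈ g₀ := (hg₀mem Z).mpr (hZc Y)
  have hZm₀ : Z ∈ m₀ := hm₀ ▸ ⟨hZm, hZg₀⟩
  -- basic inclusions
  have hm₀m : ∀ w ∈ m₀, w ∈ m := by intro w hw; rw [hm₀] at hw; exact hw.1
  have hm₀g₀ : ∀ w ∈ m₀, w ∈ g₀ := by intro w hw; rw [hm₀] at hw; exact hw.2
  have hm₀kk : m₀ ≤ kk := by rw [hkk]; exact le_sup_of_le_left le_sup_left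
  have hXkk : X ∈ kk := by
    rw [hkk]
    exact Submodule.mem_sup_left
      (Submodule.mem_sup_right (Submodule.mem_span_singleton_self X))
  have hYkk : Y ∈ kk := by
    rw [hkk]; exact Submodule.mem_sup_right (Submodule.mem_span_singleton_self Y)
  have hmkk : ∀ w ∈ m, w ∈ kk := by
    intro w hw
    obtain ⟨t, ht⟩ := hm_dec w hw
    have : w = (w - t • X) + t • X := by abel
    rw [this]
    exact kk.add_mem (hm₀kk (hm₀ ▸ ht)) (kk.smul_mem t hXkk)
  -- decomposition of elements of kk
  have hkk_dec : ∀ v ∈ kk, ∃ b s t : ℝ → Unit → Unit, True := fun _ _ => ⟨fun _ _ => (), fun _ _ => (), fun _ _ => (), trivial⟩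
  have hdec : ∀ v, v ∈ kk → ∃ b, b ∈ m₀ ∧ ∃ s t : ℝ, v = b + s • X + t • Y := by
    intro v hv
    rw [hkk] at hv
    rcases Submodule.mem_sup.mp hv with ⟨p, hp, zy, hzy, rfl⟩
    rcases Submodule.mem_sup.mp hp with ⟨b, hb, zx, hzx, rfl⟩
    rcases Submodule.mem_span_singleton.mp hzx with ⟨s, rfl⟩
    rcases Submodule.mem_span_singleton.mp hzy with ⟨t, rfl⟩
    exact ⟨b, hb, s, t, rfl⟩
  -- key bracket facts
  have hbm₀ : ∀ a ∈ m₀, ∀ b ∈ m₀, ⁅a, b⁆ ∈ m₀ := by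
    intro a ha b hb
    rw [hm₀]
    exact ⟨m.lie_mem (hm₀m a ha) (hm₀m b hb), hg₀ideal a b (hm₀g₀ b hb)⟩
  have hbY : ∀ a ∈ m₀, ⁅a, Y⁆ = 0 := fun a ha => (hg₀mem a).mp (hm₀g₀ a ha)
  have haX : ∀ a ∈ m₀, ⁅a, X⁆ ∈ kk := fun a ha =>
    hmkk _ (m.lie_mem (hm₀m a ha) hXm)
  -- closure of kk under bracket
  have hkk_closed : ∀ u ∈ kk, ∀ v ∈ kk, ⁅u, v⁆ ∈ kk := by
    intro u hu v hv
    obtain ⟨a, ha, s, t, rfl⟩ := hdec u hu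
    obtain ⟨b, hb, s', t', rfl⟩ := hdec v hv
    have expand : ⁅a + s • X + t • Y, b + s' • X + t' • Y⁆
        = ⁅a, b⁆ + s' • ⁅a, X⁆ + t' • ⁅a, Y⁆
          + (s • ⁅X, b⁆ + (s' * s) • ⁅X, X⁆ + (t' * s) • ⁅X, Y⁆)
          + (t • ⁅Y, b⁆ + (s' * t) • ⁅Y, X⁆ + (t' * t) • ⁅Y, Y⁆) := by
      simp only [add_lie, lie_add, smul_lie, lie_smul, smul_add, smul_smul]
      abel
    rw [expand, hbY a ha, hXY]
    have hXb : ⁅X, b⁆ ∈ kk := by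
      rw [← lie_skew]; exact kk.neg_mem (haX b hb)
    have hYb : ⁅Y, b⁆ = 0 := by
      rw [← lie_skew, hbY b hb, neg_zero]
    have hYX : ⁅Y, X⁆ = -Z := by rw [← lie_skew, hXY]
    rw [hYb, hYX, lie_self, lie_self]
    refine kk.add_mem (kk.add_mem ?_ ?_) ?_
    · refine kk.add_mem (kk.add_mem ?_ ?_) ?_
      · exact hm₀kk (hbm₀ a ha b hb)
      · exact kk.smul_mem _ (haX a ha)
      · simp
    · refine kk.add_mem (kk.add_mem ?_ ?_) ?_
      · exact kk.smul_mem _ hXb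
      · simp
      · exact kk.smul_mem _ (hm₀kk hZm₀)
    · refine kk.add_mem (kk.add_mem ?_ ?_) ?_
      · simp
      · exact kk.smul_mem _ (kk.neg_mem (hm₀kk hZm₀))
      · simp
  -- k₀ facts
  have hk₀m₀ : ∀ w ∈ k₀, w ∈ m₀ := by intro w hw; rw [hk₀] at hw; exact hw.1
  have hk₀l : ∀ w ∈ k₀, l w = 0 := by intro w hw; rw [hk₀] at hw; exact hw.2
  have hmem_k₀ : ∀ w, w ∈ m₀ → l w = 0 → w ∈ k₀ := by
    intro w h1 h2; rw [hk₀]; exact ⟨h1, h2⟩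
  -- the ideal property
  have huX : ∀ u ∈ k₀, ⁅u, X⁆ ∈ k₀ := by
    intro u hu
    have hum₀ := hk₀m₀ u hu
    have hug₀ := hm₀g₀ u hum₀
    have huY : ⁅u, Y⁆ = 0 := (hg₀mem u).mp hug₀
    have hjac : ⁅⁅u, X⁆, Y⁆ = 0 := by
      have := leibniz_lie u X Y
      rw [hXY, hZc' u, huY, lie_zero, add_zero] at this
      exact this.symm
    refine hmem_k₀ _ ?_ (hm_sub u (hm₀m u hum₀) X hXm)
    rw [hm₀]
    exact ⟨m.lie_mem (hm₀m u hum₀) hXm, (hg₀mem _).mpr hjac⟩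
  have hideal : ∀ u ∈ k₀, ∀ v ∈ kk, ⁅u, v⁆ ∈ k₀ := by
    intro u hu v hv
    obtain ⟨b, hb, s, t, rfl⟩ := hdec v hv
    have hum₀ := hk₀m₀ u hu
    have huY : ⁅u, Y⁆ = 0 := (hg₀mem u).mp (hm₀g₀ u hum₀)
    have expand : ⁅u, b + s • X + t • Y⁆ = ⁅u, b⁆ + s • ⁅u, X⁆ + t • ⁅u, Y⁆ := by
      simp only [lie_add, lie_smul]
    rw [expand, huY, smul_zero, add_zero]
    refine k₀.add_mem ?_ (k₀.smul_mem s (huX u hu))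
    exact hmem_k₀ _ (hbm₀ u hum₀ b hb) (hm_sub u (hm₀m u hum₀) b (hm₀m b hb))
  refine ⟨hZm₀, ?_, ?_, hkk_closed, hideal, fun u hu v hv => hk₀l _ (hideal u hu v hv)⟩
  · -- m₀ = k₀ ⊔ span Z
    apply le_antisymm
    · intro w hw
      have h1 : w - l w • Z ∈ k₀ := by
        refine hmem_k₀ _ (m₀.sub_mem hw (m₀.smul_mem _ hZm₀)) ?_
        simp [map_sub, map_smul, hlZ]
      have : w = (w - l w • Z) + l w • Z := by abel
      rw [this]
      exact Submodule.add_mem_sup h1 (Submodule.smul_mem _ _ (Submodule.mem_span_singleton_self Z))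
    · refine sup_le (by rw [hk₀]; exact inf_le_left) ?_
      rw [Submodule.span_singleton_le_iff_mem]
      exact hZm₀
  · -- disjointness
    rw [Submodule.disjoint_def]
    intro x hx1 hx2
    rcases Submodule.mem_span_singleton.mp hx2 with ⟨c, rfl⟩
    have := hk₀l _ hx1
    rw [map_smul, hlZ, smul_eq_mul, mul_one] at this
    rw [this, zero_smul]
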